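/- Probabilistic form of the orthogonality and covariance-decomposition properties: let (Ω, μ) be a probability space and X : Ω → ℝⁿ a square-integrable random vector with mean m = ∫ X dμ, whose covariance matrix Cov(X) = ∫ (X − m)(X − m)ᵀ dμ equals Σ = C Cᵀ. Then the cross-covariance of P X and X − P X is zero, ∫ (P X − P m)(X − P X − (m − P m))ᵀ dμ = 0, and the covariance of P X satisfies Cov(P X) = Cov(X) − Cov(X − P X). -/

import Mathlib

/-!
The cross-covariance of `A X` and `B X` is `A Σ Bᵀ`, so both claims are identities between
matrices. As `D` is a symmetric idempotent, `P Σ = C D Cᵀ` and `C D Cᵀ Pᵀ = C D Cᵀ`, hence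
`P Σ (1 - P)ᵀ = 0`. Expanding `Σ = (P + (1 - P)) Σ (P + (1 - P))ᵀ`, the two cross terms
vanish (one is the transpose of the other), which leaves `P Σ Pᵀ = Σ - (1 - P) Σ (1 - P)ᵀ`.
-/

open Matrix MeasureTheory

/-- The block diagonal matrix `D = [[0,0],[0,I_q]]`. -/
def Dmat (p q : ℕ) : Matrix (Fin p ⊕ Fin q) (Fin p ⊕ Fin q) ℝ :=
  Matrix.fromBlocks 0 0 0 1

/-- The block lower triangular matrix `C = [[C₁₁,0],[C₂₁,C₂₂]]`. -/
def Cmat {p q : ℕ} (C₁₁ : Matrix (Fin p) (Fin p) ℝ) (C₂₁ : Matrix (Fin q) (Fin p) ℝ)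
    (C₂₂ : Matrix (Fin q) (Fin q) ℝ) : Matrix (Fin p ⊕ Fin q) (Fin p ⊕ Fin q) ℝ :=
  Matrix.fromBlocks C₁₁ 0 C₂₁ C₂₂

/-- The covariance matrix `Cov(Y) = ∫ (Y − m_Y)(Y − m_Y)ᵀ dμ` of a random
vector `Y`, where `m_Y = ∫ Y dμ`. -/
noncomputable def covMatrix {Ω : Type*} [MeasurableSpace Ω] (μ : Measure Ω)
    {n : Type*} [Fintype n] (Y : Ω → n → ℝ) : Matrix n n ℝ :=
  Matrix.of fun i j =>
    ∫ ω, (Y ω i - (∫ ω', Y ω' ∂μ) i) * (Y ω j - (∫ ω', Y ω' ∂μ) j) ∂μ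


open ProbabilityTheory

section Covariance

variable {Ω : Type*} [MeasurableSpace Ω] {μ : Measure Ω} {n m m' : Type*}
  [Fintype n] [Fintype m] [Fintype m']

noncomputable def crossCovMatrix (μ : Measure Ω) (Y : Ω → m → ℝ) (Z : Ω → m' → ℝ) :
    Matrix m m' ℝ :=
  Matrix.of fun i j =>
    ∫ ω, (Y ω i - (∫ ω', Y ω' ∂μ) i) * (Z ω j - (∫ ω', Z ω' ∂μ) j) ∂μ

theorem covMatrix_eq_crossCovMatrix (Y : Ω → n → ℝ) :
    covMatrix μ Y = crossCovMatrix μ Y Y := rfl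

theorem crossCovMatrix_apply {Y : Ω → m → ℝ} {Z : Ω → m' → ℝ} (hY : Integrable Y μ)
    (hZ : Integrable Z μ) (i : m) (j : m') :
    crossCovMatrix μ Y Z i j = cov[fun ω ↦ Y ω i, fun ω ↦ Z ω j; μ] := by
  simp [crossCovMatrix, covariance, eval_integral hY.eval, eval_integral hZ.eval]

theorem integral_mulVec (A : Matrix m n ℝ) {X : Ω → n → ℝ} (hX : Integrable X μ) :
    ∫ ω, A *ᵥ X ω ∂μ = A *ᵥ ∫ ω, X ω ∂μ :=
  A.mulVecLin.toContinuousLinearMap.integral_comp_comm hX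

theorem MeasureTheory.Integrable.mulVec (A : Matrix m n ℝ) {X : Ω → n → ℝ}
    (hX : Integrable X μ) :
    Integrable (fun ω ↦ A *ᵥ X ω) μ :=
  A.mulVecLin.toContinuousLinearMap.integrable_comp hX

theorem crossCovMatrix_mulVec_mulVec [IsFiniteMeasure μ] {X : Ω → n → ℝ} (hX : MemLp X 2 μ)
    (A : Matrix m n ℝ) (B : Matrix m' n ℝ) :
    crossCovMatrix μ (fun ω ↦ A *ᵥ X ω) (fun ω ↦ B *ᵥ X ω) = A * covMatrix μ X * Bᵀ := by
  have hXi := hX.integrable one_le_two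
  ext i j
  rw [crossCovMatrix_apply (hXi.mulVec A) (hXi.mulVec B)]
  simp only [mulVec, dotProduct]
  rw [covariance_fun_sum_fun_sum (fun k ↦ (hX.eval k).const_mul _)
    (fun l ↦ (hX.eval l).const_mul _)]
  simp only [covariance_const_mul_left, covariance_const_mul_right, mul_apply, transpose_apply,
    covMatrix_eq_crossCovMatrix, crossCovMatrix_apply hXi hXi, Finset.sum_mul]
  rw [Finset.sum_comm]
  exact Finset.sum_congr rfl fun k _ ↦ Finset.sum_congr rfl fun l _ ↦ by ring

theorem covMatrix_mulVec [IsFiniteMeasure μ] {X : Ω → n → ℝ} (hX : MemLp X 2 μ)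
    (A : Matrix m n ℝ) : covMatrix μ (fun ω ↦ A *ᵥ X ω) = A * covMatrix μ X * Aᵀ :=
  crossCovMatrix_mulVec_mulVec hX A A

end Covariance

section Projection

variable {n R : Type*} [Fintype n] [DecidableEq n] [CommRing R]

theorem mul_mul_transpose_eq_sub_of_mul_mul_transpose_one_sub_eq_zero {S P : Matrix n n R}
    (hS : Sᵀ = S) (h : P * S * (1 - P)ᵀ = 0) :
    P * S * Pᵀ = S - (1 - P) * S * (1 - P)ᵀ := by
  have h' : (1 - P) * S * Pᵀ = 0 := by
    simpa [transpose_mul, hS, Matrix.mul_assoc] using congrArg transpose h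
  simp only [transpose_sub, transpose_one, Matrix.mul_sub, Matrix.sub_mul, Matrix.mul_one,
    Matrix.one_mul] at h h' ⊢
  rw [h', sub_zero, sub_sub_cancel]
  exact (sub_eq_zero.1 h).symm

theorem conj_mul_mul_transpose_mul_transpose_one_sub_conj_eq_zero {C D : Matrix n n R}
    (hC : IsUnit C.det) (hD : IsIdempotentElem D) (hDT : Dᵀ = D) :
    C * D * C⁻¹ * (C * Cᵀ) * (1 - C * D * C⁻¹)ᵀ = 0 := by
  have hCT : Cᵀ * Cᵀ⁻¹ = 1 := mul_nonsing_inv _ (by rwa [det_transpose])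
  calc C * D * C⁻¹ * (C * Cᵀ) * (1 - C * D * C⁻¹)ᵀ
      = C * D * Cᵀ - C * D * (Cᵀ * Cᵀ⁻¹) * D * Cᵀ := by
        simp only [transpose_sub, transpose_one, transpose_mul, transpose_nonsing_inv, hDT,
          Matrix.mul_sub, Matrix.mul_one, Matrix.mul_assoc, nonsing_inv_mul_cancel_left _ _ hC]
    _ = 0 := by rw [hCT, Matrix.mul_one, Matrix.mul_assoc C D D, hD.eq, sub_self]

end Projection

theorem isUnit_det_Cmat {p q : ℕ} {C₁₁ : Matrix (Fin p) (Fin p) ℝ}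
    (C₂₁ : Matrix (Fin q) (Fin p) ℝ) {C₂₂ : Matrix (Fin q) (Fin q) ℝ}
    (hC₁₁ : IsUnit C₁₁.det) (hC₂₂ : IsUnit C₂₂.det) :
    IsUnit (Cmat C₁₁ C₂₁ C₂₂).det := by
  rw [Cmat, det_fromBlocks_zero₁₂]
  exact hC₁₁.mul hC₂₂

theorem isIdempotentElem_Dmat (p q : ℕ) : IsIdempotentElem (Dmat p q) := by
  simp [IsIdempotentElem, Dmat, fromBlocks_multiply]

theorem transpose_Dmat (p q : ℕ) : (Dmat p q)ᵀ = Dmat p q := by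
  simp [Dmat, fromBlocks_transpose]

theorem refined_orthogonality_and_cov_decomposition_general
    {Ω : Type*} [MeasurableSpace Ω] (μ : Measure Ω) [IsProbabilityMeasure μ]
    (p q : ℕ)
    (C₁₁ : Matrix (Fin p) (Fin p) ℝ) (C₂₁ : Matrix (Fin q) (Fin p) ℝ)
    (C₂₂ : Matrix (Fin q) (Fin q) ℝ)
    (hC₁₁ : IsUnit C₁₁.det) (hC₂₂ : IsUnit C₂₂.det)
    (X : Ω → Fin p ⊕ Fin q → ℝ) (hX : MemLp X 2 μ)
    (hcov : covMatrix μ X = Cmat C₁₁ C₂₁ C₂₂ * (Cmat C₁₁ C₂₁ C₂₂)ᵀ) :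
    (Matrix.of fun i j =>
        ∫ ω, (((Cmat C₁₁ C₂₁ C₂₂ * Dmat p q * (Cmat C₁₁ C₂₁ C₂₂)⁻¹) *ᵥ X ω) i -
            ((Cmat C₁₁ C₂₁ C₂₂ * Dmat p q * (Cmat C₁₁ C₂₁ C₂₂)⁻¹) *ᵥ (∫ ω', X ω' ∂μ)) i) *
          ((X ω - (Cmat C₁₁ C₂₁ C₂₂ * Dmat p q * (Cmat C₁₁ C₂₁ C₂₂)⁻¹) *ᵥ X ω) j -
            ((∫ ω', X ω' ∂μ) -
              (Cmat C₁₁ C₂₁ C₂₂ * Dmat p q * (Cmat C₁₁ C₂₁ C₂₂)⁻¹) *ᵥ (∫ ω', X ω' ∂μ)) j) ∂μ :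
        Matrix (Fin p ⊕ Fin q) (Fin p ⊕ Fin q) ℝ) = 0 ∧
    covMatrix μ (fun ω => (Cmat C₁₁ C₂₁ C₂₂ * Dmat p q * (Cmat C₁₁ C₂₁ C₂₂)⁻¹) *ᵥ X ω) =
      covMatrix μ X -
        covMatrix μ (fun ω =>
          X ω - (Cmat C₁₁ C₂₁ C₂₂ * Dmat p q * (Cmat C₁₁ C₂₁ C₂₂)⁻¹) *ᵥ X ω) := by
  set C := Cmat C₁₁ C₂₁ C₂₂
  set P := C * Dmat p q * C⁻¹
  have horth : P * covMatrix μ X * (1 - P)ᵀ = 0 := by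
    rw [hcov]
    exact conj_mul_mul_transpose_mul_transpose_one_sub_conj_eq_zero
      (isUnit_det_Cmat C₂₁ hC₁₁ hC₂₂) (isIdempotentElem_Dmat p q) (transpose_Dmat p q)
  have hcomplement : (fun ω => X ω - P *ᵥ X ω) = fun ω => (1 - P) *ᵥ X ω := by
    simp only [sub_mulVec, one_mulVec]
  refine ⟨?_, ?_⟩
  · have h := crossCovMatrix_mulVec_mulVec hX P (1 - P)
    rw [horth, crossCovMatrix] at h
    simp only [integral_mulVec _ (hX.integrable one_le_two)] at h
    simpa only [sub_mulVec, one_mulVec] using h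
  · rw [hcomplement, covMatrix_mulVec hX, covMatrix_mulVec hX]
    refine mul_mul_transpose_eq_sub_of_mul_mul_transpose_one_sub_eq_zero ?_ horth
    rw [hcov, transpose_mul, transpose_transpose]

/-- Probabilistic orthogonality and covariance decomposition: if the
square-integrable random vector `X` has covariance `Σ = C Cᵀ`, then the
cross-covariance of `P X` and `X − P X` vanishes (with `P = C D C⁻¹`), and
`Cov(P X) = Cov(X) − Cov(X − P X)`. -/
theorem refined_orthogonality_and_cov_decomposition
    {Ω : Type*} [MeasurableSpace Ω] (μ : Measure Ω) [IsProbabilityMeasure μ]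
    (p q : ℕ) (hp : 0 < p) (hq : 0 < q)
    (C₁₁ : Matrix (Fin p) (Fin p) ℝ) (C₂₁ : Matrix (Fin q) (Fin p) ℝ)
    (C₂₂ : Matrix (Fin q) (Fin q) ℝ)
    (hC₁₁ : IsUnit C₁₁.det) (hC₂₂ : IsUnit C₂₂.det)
    (X : Ω → Fin p ⊕ Fin q → ℝ) (hX : MemLp X 2 μ)
    (hcov : covMatrix μ X = Cmat C₁₁ C₂₁ C₂₂ * (Cmat C₁₁ C₂₁ C₂₂)ᵀ) :
    (Matrix.of fun i j =>
        ∫ ω, (((Cmat C₁₁ C₂₁ C₂₂ * Dmat p q * (Cmat C₁₁ C₂₁ C₂₂)⁻¹) *ᵥ X ω) i -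
            ((Cmat C₁₁ C₂₁ C₂₂ * Dmat p q * (Cmat C₁₁ C₂₁ C₂₂)⁻¹) *ᵥ (∫ ω', X ω' ∂μ)) i) *
          ((X ω - (Cmat C₁₁ C₂₁ C₂₂ * Dmat p q * (Cmat C₁₁ C₂₁ C₂₂)⁻¹) *ᵥ X ω) j -
            ((∫ ω', X ω' ∂μ) -
              (Cmat C₁₁ C₂₁ C₂₂ * Dmat p q * (Cmat C₁₁ C₂₁ C₂₂)⁻¹) *ᵥ (∫ ω', X ω' ∂μ)) j) ∂μ :
        Matrix (Fin p ⊕ Fin q) (Fin p ⊕ Fin q) ℝ) = 0 ∧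
    covMatrix μ (fun ω => (Cmat C₁₁ C₂₁ C₂₂ * Dmat p q * (Cmat C₁₁ C₂₁ C₂₂)⁻¹) *ᵥ X ω) =
      covMatrix μ X -
        covMatrix μ (fun ω =>
          X ω - (Cmat C₁₁ C₂₁ C₂₂ * Dmat p q * (Cmat C₁₁ C₂₁ C₂₂)⁻¹) *ᵥ X ω) :=
  refined_orthogonality_and_cov_decomposition_general μ p q C₁₁ C₂₁ C₂₂ hC₁₁ hC₂₂ X hX hcov
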